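/- There is a constant c > 0, depending only on the dimension d, such that for every Borel set Λ ⊂ R^d and every decreasing kernel f: Cap_f(Λ) ≤ c^{−1}·[ Σ_{n≥0} (f(2^{−n}) − f(2^{1−n}))·N_n(Λ)^{−1} ]^{−1}, where N_n(Λ) is the number of dyadic cubes in D_n that intersect Λ. -/

import Mathlib

open MeasureTheory ProbabilityTheory Filter Set Asymptotics
open scoped ENNReal NNReal Topology InnerProductSpace

noncomputable section

/-- A decreasing kernel function `f : [0,∞) → [0,∞]` (encoded on all of `ℝ`), normalized
so that `f(0) = lim_{r ↓ 0} f(r)` whenever this limit is finite (in `ℝ≥0∞` the limit always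
exists by monotonicity, and the condition is equivalent to `f` being right-continuous at `0`). -/
def IsKernel (f : ℝ → ℝ≥0∞) : Prop :=
  AntitoneOn f (Set.Ici 0) ∧ Filter.Tendsto f (𝓝[>] (0:ℝ)) (𝓝 (f 0))

/-- The `f`-energy of a measure: `E_f(ν) = ∫∫ f(|x−y|) dν(x) dν(y)`. -/
def energy {X : Type*} [MeasurableSpace X] [PseudoMetricSpace X]
    (f : ℝ → ℝ≥0∞) (ν : Measure X) : ℝ≥0∞ :=
  ∫⁻ x, ∫⁻ y, f (dist x y) ∂ν ∂ν

/-- The `f`-capacity of a set: `Cap_f(Λ) = [inf_{ν(Λ)=1} E_f(ν)]⁻¹`, the infimum running over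
Borel probability measures giving full mass to `Λ`. -/
def capacity {X : Type*} [MeasurableSpace X] [PseudoMetricSpace X]
    (f : ℝ → ℝ≥0∞) (Λ : Set X) : ℝ≥0∞ :=
  (⨅ (ν : Measure X) (_ : IsProbabilityMeasure ν) (_ : ν Λ = 1), energy f ν)⁻¹

/-- The dyadic cube of side `2^{-n}` in `ℝ^d` indexed by `j ∈ ℤ^d`. -/
def dyadicCube (d n : ℕ) (j : Fin d → ℤ) : Set (EuclideanSpace ℝ (Fin d)) :=
  {x | ∀ i : Fin d, (j i : ℝ) * 2 ^ (-(n:ℤ)) ≤ x i ∧ x i < ((j i : ℝ) + 1) * 2 ^ (-(n:ℤ))}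

/-- `Σ_{Q ∈ D_n} ν(Q)²`, the sum over all dyadic cubes of side `2^{-n}`. -/
def cubeSum (d n : ℕ) (ν : Measure (EuclideanSpace ℝ (Fin d))) : ℝ≥0∞ :=
  ∑' j : Fin d → ℤ, (ν (dyadicCube d n j)) ^ 2

/-- The number `N_n(Λ)` of dyadic cubes of side `2^{-n}` meeting `Λ` (possibly infinite). -/
def cubeCount (d n : ℕ) (Λ : Set (EuclideanSpace ℝ (Fin d))) : ℕ∞ :=
  {j : Fin d → ℤ | (dyadicCube d n j ∩ Λ).Nonempty}.encard


/-!
If `ν(Λ) = 1`, Cauchy–Schwarz gives `Σ_{Q ∈ D_m} ν(Q)² ≥ N_m(Λ)⁻¹`. When `2^k ≥ √d`, every cube of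
`D_{n+k}` has diameter at most `2^{-n}`, so this sum for `m = n + k` is at most
`∫ ν(B(x, 2^{-n})) dν(x)`. Weighting by the increments `f(2^{-n}) - f(2^{1-n})` and using the
layer-cake bound `Σ_n (f(2^{-n}) - f(2^{1-n})) 𝟙[r ≤ 2^{-n}] ≤ f(r)` bounds the resulting series by
`E_f(ν)`. Since each cube of `D_n` contains `2^{kd}` cubes of `D_{n+k}`, `N_{n+k} ≤ 2^{kd} N_n`;
taking `k = d` gives `c = 2^{-d²}`.
-/

theorem ENNReal.sq_sum_le_card_mul_sum_sq {ι : Type*} (s : Finset ι) (a : ι → ℝ≥0∞) :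
    (∑ i ∈ s, a i) ^ 2 ≤ s.card * ∑ i ∈ s, a i ^ 2 := by
  by_cases ha : ∀ i ∈ s, a i ≠ ⊤
  · have hcoe : ∀ i ∈ s, ((a i).toNNReal : ℝ≥0∞) = a i := fun i hi => ENNReal.coe_toNNReal (ha i hi)
    calc (∑ i ∈ s, a i) ^ 2 = (∑ i ∈ s, ((a i).toNNReal : ℝ≥0∞)) ^ 2 := by
          rw [Finset.sum_congr rfl hcoe]
      _ ≤ s.card * ∑ i ∈ s, ((a i).toNNReal : ℝ≥0∞) ^ 2 := by
          exact_mod_cast _root_.sq_sum_le_card_mul_sum_sq (s := s) (f := fun i => (a i).toNNReal)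
      _ = s.card * ∑ i ∈ s, a i ^ 2 := by
          rw [Finset.sum_congr rfl fun i hi => by rw [hcoe i hi]]
  · push Not at ha
    obtain ⟨i, hi, hai⟩ := ha
    have hsum : ∑ i ∈ s, a i ^ 2 = ⊤ :=
      ENNReal.sum_eq_top.2 ⟨i, hi, by rw [hai]; rfl⟩
    rw [hsum, ENNReal.mul_top (by exact_mod_cast (Finset.card_pos.2 ⟨i, hi⟩).ne')]
    exact le_top

theorem tsum_lintegral_le_lintegral_tsum {α ι : Type*} [MeasurableSpace α] (μ : Measure α)
    (g : ι → α → ℝ≥0∞) : ∑' i, ∫⁻ x, g i x ∂μ ≤ ∫⁻ x, ∑' i, g i x ∂μ := by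
  classical
  rw [ENNReal.tsum_eq_iSup_sum]
  refine iSup_le fun s => ?_
  have hsum : ∑ i ∈ s, ∫⁻ x, g i x ∂μ ≤ ∫⁻ x, ∑ i ∈ s, g i x ∂μ := by
    induction s using Finset.induction with
    | empty => simp
    | insert i s hi ih =>
      simp only [Finset.sum_insert hi]
      exact (add_le_add_right ih _).trans (le_lintegral_add _ _)
  exact hsum.trans (lintegral_mono fun x => ENNReal.sum_le_tsum s)

theorem Set.encard_le_encard_mul_of_mapsTo {α β : Type*} {ψ : α → β} {A : Set α} {B : Set β}
    {K : ℕ∞} (hψ : MapsTo ψ A B) (hK : ∀ b ∈ B, (A ∩ ψ ⁻¹' {b}).encard ≤ K) :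
    A.encard ≤ B.encard * K := by
  have hfiber : ∀ a ∈ A, a ∈ A ∩ ψ ⁻¹' {ψ a} := fun a ha => ⟨ha, rfl⟩
  obtain hB | hB := B.finite_or_infinite
  · calc A.encard ≤ (⋃ b ∈ hB.toFinset, A ∩ ψ ⁻¹' {b}).encard :=
          encard_le_encard fun a ha => mem_biUnion (hB.mem_toFinset.2 (hψ ha)) (hfiber a ha)
      _ ≤ ∑ b ∈ hB.toFinset, (A ∩ ψ ⁻¹' {b}).encard := Finset.set_encard_biUnion_le _ _
      _ ≤ ∑ _b ∈ hB.toFinset, K := Finset.sum_le_sum fun b hb => hK b (hB.mem_toFinset.1 hb)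
      _ = B.encard * K := by rw [Finset.sum_const, nsmul_eq_mul, hB.encard_eq_coe_toFinset_card]
  · obtain rfl | ⟨a, ha⟩ := A.eq_empty_or_nonempty
    · simp
    have hK0 : K ≠ 0 := ((encard_pos.2 ⟨a, hfiber a ha⟩).trans_le (hK _ (hψ ha))).ne'
    rw [hB.encard_eq, ENat.top_mul hK0]
    exact le_top

theorem inv_encard_le_tsum_measure_sq {X ι : Type*} [MeasurableSpace X] {ν : Measure X}
    {Λ : Set X} (hΛ : ν Λ = 1) {Q : ι → Set X} (hcover : Λ ⊆ ⋃ j, Q j) :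
    (({j | (Q j ∩ Λ).Nonempty}.encard : ℕ∞) : ℝ≥0∞)⁻¹ ≤ ∑' j, ν (Q j) ^ 2 := by
  set J := {j | (Q j ∩ Λ).Nonempty}
  obtain hJ | hJ := J.finite_or_infinite
  swap
  · simp [hJ.encard_eq]
  have hcoverJ : Λ ⊆ ⋃ j ∈ hJ.toFinset, Q j := fun x hx => by
    obtain ⟨j, hj⟩ := mem_iUnion.1 (hcover hx)
    exact mem_biUnion (hJ.mem_toFinset.2 ⟨x, hj, hx⟩) hj
  have hone : 1 ≤ ∑ j ∈ hJ.toFinset, ν (Q j) :=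
    calc 1 = ν Λ := hΛ.symm
      _ ≤ ν (⋃ j ∈ hJ.toFinset, Q j) := measure_mono hcoverJ
      _ ≤ ∑ j ∈ hJ.toFinset, ν (Q j) := measure_biUnion_finset_le _ _
  have hcard : (hJ.toFinset.card : ℝ≥0∞) ≠ 0 := by
    refine Nat.cast_ne_zero.2 (Finset.card_ne_zero.2 ?_)
    exact Finset.nonempty_of_sum_ne_zero (ne_bot_of_le_ne_bot one_ne_zero hone)
  rw [hJ.encard_eq_coe_toFinset_card, ENat.toENNReal_coe,
    ENNReal.inv_le_iff_le_mul (fun _ => hcard) (by simp)]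
  calc 1 ≤ (∑ j ∈ hJ.toFinset, ν (Q j)) ^ 2 := one_le_pow₀ hone
    _ ≤ hJ.toFinset.card * ∑ j ∈ hJ.toFinset, ν (Q j) ^ 2 := ENNReal.sq_sum_le_card_mul_sum_sq _ _
    _ ≤ hJ.toFinset.card * ∑' j, ν (Q j) ^ 2 := by gcongr; exact ENNReal.sum_le_tsum _

def dyadicIncrement (f : ℝ → ℝ≥0∞) (n : ℕ) : ℝ≥0∞ :=
  f ((2:ℝ) ^ (-(n:ℤ))) - f ((2:ℝ) ^ (1 - (n:ℤ)))

theorem tsum_dyadicIncrement_indicator_le {f : ℝ → ℝ≥0∞} (hf : AntitoneOn f (Ici 0)) {r : ℝ}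
    (hr : 0 ≤ r) :
    ∑' n : ℕ, (Iic ((2:ℝ) ^ (-(n:ℤ)))).indicator (fun _ => dyadicIncrement f n) r ≤ f r := by
  have hpos : ∀ m : ℤ, 0 ≤ (2:ℝ) ^ m := fun m => (zpow_pos two_pos m).le
  -- The partial sums telescope up to the last dyadic scale that is still `≥ r`.
  have hpartial : ∀ N : ℕ, ∑ n ∈ Finset.range N,
      (Iic ((2:ℝ) ^ (-(n:ℤ)))).indicator (fun _ => dyadicIncrement f n) r
        ≤ f (max r (2 ^ (1 - (N:ℤ)))) := by
    intro N
    induction N with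
    | zero => simp
    | succ N ih =>
      have hle : (2:ℝ) ^ (-(N:ℤ)) ≤ 2 ^ (1 - (N:ℤ)) := zpow_le_zpow_right₀ one_le_two (by omega)
      have hexp : 1 - ((N + 1 : ℕ) : ℤ) = -(N:ℤ) := by push_cast; ring
      rw [Finset.sum_range_succ, hexp]
      by_cases hrN : r ≤ 2 ^ (-(N:ℤ))
      · rw [indicator_of_mem (mem_Iic.2 hrN), max_eq_right hrN]
        rw [max_eq_right (hrN.trans hle)] at ih
        calc _ ≤ f (2 ^ (1 - (N:ℤ))) + dyadicIncrement f N := add_le_add_left ih _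
          _ = f (2 ^ (-(N:ℤ))) := add_tsub_cancel_of_le (hf (hpos _) (hpos _) hle)
      · rw [indicator_of_notMem (notMem_Iic.2 (not_le.1 hrN)), add_zero]
        exact ih.trans (hf (le_max_of_le_left hr) (le_max_of_le_left hr) (max_le_max le_rfl hle))
  rw [ENNReal.tsum_eq_iSup_nat]
  exact iSup_le fun N => (hpartial N).trans (hf hr (le_max_of_le_left hr) (le_max_left _ _))

section MetricMeasure

variable {X : Type*} [MeasurableSpace X] [PseudoMetricSpace X]

theorem tsum_measure_sq_le_lintegral_measure_closedBall {ι : Type*} [Countable ι]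
    (ν : Measure X) {Q : ι → Set X} (hQ : ∀ j, MeasurableSet (Q j))
    (hdisj : Pairwise fun i j => Disjoint (Q i) (Q j)) {r : ℝ}
    (hdiam : ∀ j, ∀ x ∈ Q j, ∀ y ∈ Q j, dist x y ≤ r) :
    ∑' j, ν (Q j) ^ 2 ≤ ∫⁻ x, ν (Metric.closedBall x r) ∂ν :=
  calc ∑' j, ν (Q j) ^ 2 = ∑' j, ∫⁻ _ in Q j, ν (Q j) ∂ν := by
        simp only [setLIntegral_const, sq]
    _ ≤ ∑' j, ∫⁻ x in Q j, ν (Metric.closedBall x r) ∂ν :=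
        ENNReal.tsum_le_tsum fun j => setLIntegral_mono' (hQ j) fun x hx =>
          measure_mono fun y hy => Metric.mem_closedBall.2 (hdiam j y hy x hx)
    _ = ∫⁻ x in ⋃ j, Q j, ν (Metric.closedBall x r) ∂ν := (lintegral_iUnion hQ hdisj _).symm
    _ ≤ ∫⁻ x, ν (Metric.closedBall x r) ∂ν := setLIntegral_le_lintegral _ _

theorem tsum_dyadicIncrement_mul_lintegral_le_energy [OpensMeasurableSpace X] {f : ℝ → ℝ≥0∞}
    (hf : AntitoneOn f (Ici 0)) (ν : Measure X) :
    ∑' n : ℕ, dyadicIncrement f n * ∫⁻ x, ν (Metric.closedBall x (2 ^ (-(n:ℤ)))) ∂ν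
      ≤ energy f ν := by
  have hpoint : ∀ x, ∑' n : ℕ, dyadicIncrement f n * ν (Metric.closedBall x (2 ^ (-(n:ℤ))))
      ≤ ∫⁻ y, f (dist x y) ∂ν := fun x =>
    calc _ = ∑' n : ℕ, ∫⁻ y, (Metric.closedBall x (2 ^ (-(n:ℤ)))).indicator
            (fun _ => dyadicIncrement f n) y ∂ν :=
          tsum_congr fun n => (lintegral_indicator_const measurableSet_closedBall _).symm
      _ ≤ ∫⁻ y, ∑' n : ℕ, (Metric.closedBall x (2 ^ (-(n:ℤ)))).indicator
            (fun _ => dyadicIncrement f n) y ∂ν := tsum_lintegral_le_lintegral_tsum _ _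
      _ ≤ ∫⁻ y, f (dist x y) ∂ν := lintegral_mono fun y => by
          classical
          simpa only [indicator_apply, Metric.mem_closedBall', mem_Iic]
            using tsum_dyadicIncrement_indicator_le hf (dist_nonneg (x := x) (y := y))
  calc _ ≤ ∑' n : ℕ, ∫⁻ x, dyadicIncrement f n * ν (Metric.closedBall x (2 ^ (-(n:ℤ)))) ∂ν :=
        ENNReal.tsum_le_tsum fun n => lintegral_const_mul_le _ _
    _ ≤ ∫⁻ x, ∑' n : ℕ, dyadicIncrement f n * ν (Metric.closedBall x (2 ^ (-(n:ℤ)))) ∂ν :=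
        tsum_lintegral_le_lintegral_tsum _ _
    _ ≤ energy f ν := lintegral_mono hpoint

theorem capacity_le_of_mul_le_energy {f : ℝ → ℝ≥0∞} {Λ : Set X} {c : ℝ≥0} (hc : c ≠ 0)
    {S : ℝ≥0∞} (h : ∀ ν : Measure X, IsProbabilityMeasure ν → ν Λ = 1 → c * S ≤ energy f ν) :
    capacity f Λ ≤ (c : ℝ≥0∞)⁻¹ * S⁻¹ := by
  rw [capacity, ← ENNReal.mul_inv (Or.inl (by simpa)) (Or.inl ENNReal.coe_ne_top)]
  exact ENNReal.inv_le_inv.2 (le_iInf fun ν => le_iInf fun hν => le_iInf fun hΛ => h ν hν hΛ)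

end MetricMeasure

section DyadicCube

variable {d : ℕ}

theorem mem_dyadicCube_iff {n : ℕ} {j : Fin d → ℤ} {x : EuclideanSpace ℝ (Fin d)} :
    x ∈ dyadicCube d n j ↔ ∀ i, ⌊x i * 2 ^ n⌋ = j i := by
  have h2n : (0:ℝ) < 2 ^ n := pow_pos two_pos n
  refine forall_congr' fun i => ?_
  rw [Int.floor_eq_iff, zpow_neg, zpow_natCast, ← div_eq_mul_inv, ← div_eq_mul_inv,
    div_le_iff₀ h2n, lt_div_iff₀ h2n]

theorem mem_dyadicCube_floor (n : ℕ) (x : EuclideanSpace ℝ (Fin d)) :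
    x ∈ dyadicCube d n (fun i => ⌊x i * 2 ^ n⌋) :=
  mem_dyadicCube_iff.2 fun _ => rfl

theorem measurableSet_dyadicCube (n : ℕ) (j : Fin d → ℤ) : MeasurableSet (dyadicCube d n j) := by
  simp only [dyadicCube, ofPred_forall, ofPred_and]
  exact MeasurableSet.iInter fun i =>
    (measurableSet_le measurable_const (by fun_prop)).inter
      (measurableSet_lt (by fun_prop) measurable_const)

theorem pairwise_disjoint_dyadicCube (n : ℕ) :
    Pairwise fun j j' : Fin d → ℤ => Disjoint (dyadicCube d n j) (dyadicCube d n j') :=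
  fun _ _ hne => disjoint_left.2 fun _ hx hx' => hne <| funext fun i =>
    (mem_dyadicCube_iff.1 hx i).symm.trans (mem_dyadicCube_iff.1 hx' i)

theorem dist_le_of_mem_dyadicCube {n : ℕ} {j : Fin d → ℤ} {x y : EuclideanSpace ℝ (Fin d)}
    (hx : x ∈ dyadicCube d n j) (hy : y ∈ dyadicCube d n j) :
    dist x y ≤ √d * 2 ^ (-(n:ℤ)) := by
  set s : ℝ := 2 ^ (-(n:ℤ))
  have hs : 0 < s := zpow_pos two_pos _
  have hcoord : ∀ i, dist (x i) (y i) ≤ s := fun i => by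
    obtain ⟨hx₁, hx₂⟩ := hx i
    obtain ⟨hy₁, hy₂⟩ := hy i
    rw [Real.dist_eq, abs_sub_le_iff]
    constructor <;> linarith
  calc dist x y = √(∑ i, dist (x i) (y i) ^ 2) := EuclideanSpace.dist_eq x y
    _ ≤ √(∑ _i : Fin d, s ^ 2) := Real.sqrt_le_sqrt <|
        Finset.sum_le_sum fun i _ => pow_le_pow_left₀ dist_nonneg (hcoord i) 2
    _ = √d * s := by
        rw [Finset.sum_const, Finset.card_univ, Fintype.card_fin, nsmul_eq_mul,
          Real.sqrt_mul (Nat.cast_nonneg _), Real.sqrt_sq hs.le]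

-- `ℤ`-division rounds down here: this indexes the cube of `D_n` containing cube `j` of `D_{n+k}`.
def dyadicAncestor (k : ℕ) (j : Fin d → ℤ) : Fin d → ℤ := fun i => j i / 2 ^ k

theorem dyadicCube_subset_dyadicCube_dyadicAncestor (n k : ℕ) (j : Fin d → ℤ) :
    dyadicCube d (n + k) j ⊆ dyadicCube d n (dyadicAncestor k j) := fun x hx =>
  mem_dyadicCube_iff.2 fun i => by
    have hscale : x i * 2 ^ n = x i * 2 ^ (n + k) / ((2 ^ k : ℕ) : ℝ) := by
      rw [pow_add]; push_cast; field_simp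
    rw [hscale, Int.floor_div_natCast, mem_dyadicCube_iff.1 hx i, dyadicAncestor]
    push_cast
    rfl

theorem encard_dyadicAncestor_preimage_le (k : ℕ) (j : Fin d → ℤ) :
    (dyadicAncestor k ⁻¹' {j}).encard ≤ 2 ^ (k * d) := by
  have h2k : (0:ℤ) < 2 ^ k := pow_pos two_pos k
  calc (dyadicAncestor k ⁻¹' {j}).encard
      ≤ (Fintype.piFinset fun i => Finset.Ico (j i * 2 ^ k) (j i * 2 ^ k + 2 ^ k) : Set _).encard :=
        encard_le_encard fun j' hj' => Finset.mem_coe.2 <| Fintype.mem_piFinset.2 fun i =>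
          Finset.mem_Ico.2 <| (Int.ediv_eq_iff_of_pos h2k).1 (congrFun hj' i)
    _ = 2 ^ (k * d) := by
        rw [encard_coe_eq_coe_finsetCard, Fintype.card_piFinset]
        simp [Int.card_Ico, Int.toNat_pow_of_nonneg, pow_mul]

theorem cubeCount_add_le (n k : ℕ) (Λ : Set (EuclideanSpace ℝ (Fin d))) :
    cubeCount d (n + k) Λ ≤ cubeCount d n Λ * 2 ^ (k * d) := by
  refine encard_le_encard_mul_of_mapsTo (ψ := dyadicAncestor k) ?_ fun j _ => ?_
  · rintro j ⟨x, hxQ, hxΛ⟩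
    exact ⟨x, dyadicCube_subset_dyadicCube_dyadicAncestor n k j hxQ, hxΛ⟩
  · exact (encard_le_encard inter_subset_right).trans (encard_dyadicAncestor_preimage_le k j)

theorem inv_cubeCount_le_mul_inv_cubeCount_add (n k : ℕ) (Λ : Set (EuclideanSpace ℝ (Fin d))) :
    (cubeCount d n Λ : ℝ≥0∞)⁻¹ ≤ 2 ^ (k * d) * (cubeCount d (n + k) Λ : ℝ≥0∞)⁻¹ := by
  have hcount : (cubeCount d (n + k) Λ : ℝ≥0∞) ≤ cubeCount d n Λ * 2 ^ (k * d) := by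
    exact_mod_cast ENat.toENNReal_le.2 (cubeCount_add_le n k Λ)
  rw [← div_eq_mul_inv, ← ENNReal.inv_div (Or.inl (by simp)) (Or.inl (by simp))]
  exact ENNReal.inv_le_inv.2 (ENNReal.div_le_of_le_mul hcount)

theorem inv_cubeCount_le_cubeSum (n : ℕ) {Λ : Set (EuclideanSpace ℝ (Fin d))}
    {ν : Measure (EuclideanSpace ℝ (Fin d))} (hΛ : ν Λ = 1) :
    (cubeCount d n Λ : ℝ≥0∞)⁻¹ ≤ cubeSum d n ν :=
  inv_encard_le_tsum_measure_sq hΛ fun x _ => mem_iUnion.2 ⟨_, mem_dyadicCube_floor n x⟩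

theorem cubeSum_le_lintegral_measure_closedBall (n : ℕ) (ν : Measure (EuclideanSpace ℝ (Fin d)))
    {r : ℝ} (hr : √d * 2 ^ (-(n:ℤ)) ≤ r) :
    cubeSum d n ν ≤ ∫⁻ x, ν (Metric.closedBall x r) ∂ν :=
  tsum_measure_sq_le_lintegral_measure_closedBall ν (measurableSet_dyadicCube n)
    (pairwise_disjoint_dyadicCube n) fun _ _ hx _ hy => (dist_le_of_mem_dyadicCube hx hy).trans hr

end DyadicCube

theorem tsum_dyadicIncrement_mul_inv_cubeCount_le {d k : ℕ} (hk : √d ≤ 2 ^ k)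
    {f : ℝ → ℝ≥0∞} (hf : AntitoneOn f (Ici 0)) {Λ : Set (EuclideanSpace ℝ (Fin d))}
    {ν : Measure (EuclideanSpace ℝ (Fin d))} (hΛ : ν Λ = 1) :
    ∑' n : ℕ, dyadicIncrement f n * (cubeCount d n Λ : ℝ≥0∞)⁻¹ ≤ 2 ^ (k * d) * energy f ν := by
  have hscale : ∀ n : ℕ, √d * 2 ^ (-((n + k : ℕ) : ℤ)) ≤ (2:ℝ) ^ (-(n:ℤ)) := fun n =>
    calc √d * 2 ^ (-((n + k : ℕ) : ℤ)) ≤ 2 ^ k * 2 ^ (-((n + k : ℕ) : ℤ)) := by gcongr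
      _ = 2 ^ (-(n:ℤ)) := by
        rw [← zpow_natCast, ← zpow_add₀ two_ne_zero]
        push_cast
        ring_nf
  have hterm : ∀ n : ℕ, (cubeCount d n Λ : ℝ≥0∞)⁻¹
      ≤ 2 ^ (k * d) * ∫⁻ x, ν (Metric.closedBall x (2 ^ (-(n:ℤ)))) ∂ν := fun n =>
    calc (cubeCount d n Λ : ℝ≥0∞)⁻¹ ≤ 2 ^ (k * d) * (cubeCount d (n + k) Λ : ℝ≥0∞)⁻¹ :=
          inv_cubeCount_le_mul_inv_cubeCount_add n k Λ
      _ ≤ 2 ^ (k * d) * cubeSum d (n + k) ν := by gcongr; exact inv_cubeCount_le_cubeSum _ hΛ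
      _ ≤ 2 ^ (k * d) * ∫⁻ x, ν (Metric.closedBall x (2 ^ (-(n:ℤ)))) ∂ν := by
          gcongr; exact cubeSum_le_lintegral_measure_closedBall _ ν (hscale n)
  calc ∑' n : ℕ, dyadicIncrement f n * (cubeCount d n Λ : ℝ≥0∞)⁻¹
      ≤ ∑' n : ℕ, dyadicIncrement f n *
          (2 ^ (k * d) * ∫⁻ x, ν (Metric.closedBall x (2 ^ (-(n:ℤ)))) ∂ν) :=
        ENNReal.tsum_le_tsum fun n => by gcongr; exact hterm n
    _ = 2 ^ (k * d) *
          ∑' n : ℕ, dyadicIncrement f n * ∫⁻ x, ν (Metric.closedBall x (2 ^ (-(n:ℤ)))) ∂ν := by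
        rw [← ENNReal.tsum_mul_left]
        simp only [mul_left_comm]
    _ ≤ 2 ^ (k * d) * energy f ν := by
        gcongr; exact tsum_dyadicIncrement_mul_lintegral_le_energy hf ν

theorem capacity_le_of_cubeCount_general (d : ℕ) :
    ∃ c : ℝ≥0, 0 < c ∧
      ∀ (Λ : Set (EuclideanSpace ℝ (Fin d))), MeasurableSet Λ →
      ∀ f : ℝ → ℝ≥0∞, IsKernel f →
        capacity f Λ ≤ (c : ℝ≥0∞)⁻¹ *
          (∑' n : ℕ, (f ((2:ℝ) ^ (-(n:ℤ))) - f ((2:ℝ) ^ (1-(n:ℤ)))) *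
            ((cubeCount d n Λ : ℝ≥0∞))⁻¹)⁻¹ := by
  have hd : √d ≤ 2 ^ d := Real.sqrt_le_iff.2 ⟨by positivity, by
    calc (d:ℝ) ≤ 2 ^ d := by exact_mod_cast (Nat.lt_two_pow_self).le
      _ ≤ (2 ^ d) ^ 2 := le_self_pow₀ (one_le_pow₀ one_le_two) two_ne_zero⟩
  refine ⟨(2 ^ (d * d))⁻¹, by positivity, fun Λ _ f hf => ?_⟩
  refine capacity_le_of_mul_le_energy (by positivity) fun ν _ hΛ => ?_
  rw [ENNReal.coe_inv (by positivity), ENNReal.coe_pow, ENNReal.coe_ofNat,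
    ENNReal.inv_mul_le_iff (by positivity) (by simp)]
  exact tsum_dyadicIncrement_mul_inv_cubeCount_le hd hf.1 hΛ

/-- **General upper bound on capacity via counting dyadic cubes**: there is a constant
`c = c(d) > 0` such that for every Borel `Λ ⊆ ℝ^d` and decreasing kernel `f`,
`Cap_f(Λ) ≤ c⁻¹·[Σ_n (f(2^{−n}) − f(2^{1−n}))·N_n(Λ)⁻¹]⁻¹`. -/
theorem capacity_le_of_cubeCount (d : ℕ) (hd : 1 ≤ d) :
    ∃ c : ℝ≥0, 0 < c ∧
      ∀ (Λ : Set (EuclideanSpace ℝ (Fin d))), MeasurableSet Λ →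
      ∀ f : ℝ → ℝ≥0∞, IsKernel f →
        capacity f Λ ≤ (c : ℝ≥0∞)⁻¹ *
          (∑' n : ℕ, (f ((2:ℝ) ^ (-(n:ℤ))) - f ((2:ℝ) ^ (1-(n:ℤ)))) *
            ((cubeCount d n Λ : ℝ≥0∞))⁻¹)⁻¹ :=
  capacity_le_of_cubeCount_general d
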